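/- arXiv:1908.11228 — 8 statements merged into one kernel-verified Lean document; each statement's English description precedes it below -/
import Mathlib

section
/- Let f : 𝕋 → ℝ be continuous, even, with mean value zero, and let (x_n)_{n≥1} be a greedy sequence for f with initial points x_1, …, x_M. Then for every n ≥ M we have ∑_{k=1}^{n} ∑_{ℓ=1}^{n} f(x_k − x_ℓ) ≤ n·f(0) + 2·∑_{1≤k<ℓ≤M} f(x_ℓ − x_k). -/
open MeasureTheory Filter

instance : IsProbabilityMeasure (volume : Measure UnitAddCircle) :=
  ⟨UnitAddCircle.measure_univ⟩

/-- Symmetric double sum decomposition. -/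
lemma sym_double_sum (a : ℕ → ℕ → ℝ) (hsym : ∀ k l, a k l = a l k) (n : ℕ) :
    ∑ k ∈ Finset.Icc 1 n, ∑ l ∈ Finset.Icc 1 n, a k l
      = (∑ k ∈ Finset.Icc 1 n, a k k)
        + 2 * ∑ k ∈ Finset.Icc 1 n, ∑ l ∈ Finset.Ioc k n, a k l := by
  induction n with
  | zero => simp
  | succ n ih =>
    have hins : Finset.Icc 1 (n + 1) = insert (n + 1) (Finset.Icc 1 n) := by
      ext m; simp only [Finset.mem_Icc, Finset.mem_insert]; omega
    have hnot : (n + 1) ∉ Finset.Icc 1 n := by simp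
    have hinner : ∀ k, k ∈ Finset.Icc 1 n →
        Finset.Ioc k (n + 1) = insert (n + 1) (Finset.Ioc k n) := by
      intro k hk
      simp only [Finset.mem_Icc] at hk
      ext m
      simp only [Finset.mem_Ioc, Finset.mem_insert]
      omega
    have LHS : ∑ k ∈ Finset.Icc 1 (n+1), ∑ l ∈ Finset.Icc 1 (n+1), a k l
        = a (n+1) (n+1) + 2 * (∑ l ∈ Finset.Icc 1 n, a l (n+1))
          + ∑ k ∈ Finset.Icc 1 n, ∑ l ∈ Finset.Icc 1 n, a k l := by
      rw [hins, Finset.sum_insert hnot, Finset.sum_insert hnot]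
      have h1 : ∀ k ∈ Finset.Icc 1 n,
          ∑ l ∈ insert (n + 1) (Finset.Icc 1 n), a k l
            = a k (n + 1) + ∑ l ∈ Finset.Icc 1 n, a k l := by
        intro k _; rw [Finset.sum_insert hnot]
      rw [Finset.sum_congr rfl h1, Finset.sum_add_distrib]
      have h4 : ∑ l ∈ Finset.Icc 1 n, a (n + 1) l = ∑ l ∈ Finset.Icc 1 n, a l (n + 1) :=
        Finset.sum_congr rfl fun l _ => hsym _ _
      rw [h4]; ring
    have RHS : ∑ k ∈ Finset.Icc 1 (n+1), ∑ l ∈ Finset.Ioc k (n+1), a k l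
        = (∑ l ∈ Finset.Icc 1 n, a l (n+1))
          + ∑ k ∈ Finset.Icc 1 n, ∑ l ∈ Finset.Ioc k n, a k l := by
      rw [hins, Finset.sum_insert hnot]
      have h3 : Finset.Ioc (n + 1) (n + 1) = ∅ := by simp
      have h2 : ∀ k ∈ Finset.Icc 1 n,
          ∑ l ∈ Finset.Ioc k (n + 1), a k l
            = a k (n + 1) + ∑ l ∈ Finset.Ioc k n, a k l := by
        intro k hk
        rw [hinner k hk, Finset.sum_insert (by simp)]
      rw [h3, Finset.sum_empty, Finset.sum_congr rfl h2, Finset.sum_add_distrib]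
      ring
    have hdiag : ∑ k ∈ Finset.Icc 1 (n+1), a k k
        = a (n+1) (n+1) + ∑ k ∈ Finset.Icc 1 n, a k k := by
      rw [hins, Finset.sum_insert hnot]
    rw [LHS, RHS, hdiag, ih]
    ring

/-- For a greedy sequence for a continuous, even, mean-zero `f : 𝕋 → ℝ`
with initial points `x 1, …, x M`, for every `n ≥ M` we have
`∑_{k=1}^{n} ∑_{ℓ=1}^{n} f(x_k − x_ℓ) ≤ n·f(0) + 2·∑_{1 ≤ k < ℓ ≤ M} f(x_ℓ − x_k)`. -/
theorem double_sum_greedy_bound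
    (f : UnitAddCircle → ℝ) (hf_cont : Continuous f)
    (hf_even : ∀ t : UnitAddCircle, f (-t) = f t)
    (hf_mean : (∫ t : UnitAddCircle, f t) = 0)
    (M : ℕ) (hM : 1 ≤ M) (x : ℕ → UnitAddCircle)
    (hgreedy : ∀ n : ℕ, M < n → ∀ y : UnitAddCircle,
      ∑ k ∈ Finset.Icc 1 (n - 1), f (x n - x k) ≤ ∑ k ∈ Finset.Icc 1 (n - 1), f (y - x k))
    (n : ℕ) (hn : M ≤ n) :
    ∑ k ∈ Finset.Icc 1 n, ∑ l ∈ Finset.Icc 1 n, f (x k - x l)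
      ≤ (n : ℝ) * f 0 + 2 * ∑ k ∈ Finset.Icc 1 M, ∑ l ∈ Finset.Ioc k M, f (x l - x k) := by
  -- integrability
  have hint : Integrable f :=
    hf_cont.integrable_of_hasCompactSupport (HasCompactSupport.of_compactSpace f)
  -- key: for m > M, the greedy sum is ≤ 0
  have hkey : ∀ m : ℕ, M < m → ∑ k ∈ Finset.Icc 1 (m - 1), f (x m - x k) ≤ 0 := by
    intro m hm
    set c : ℝ := ∑ k ∈ Finset.Icc 1 (m - 1), f (x m - x k) with hc
    have hintg : ∀ k : ℕ, Integrable (fun y : UnitAddCircle => f (y - x k)) :=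
      fun k => hint.comp_sub_right (x k)
    have hI : (∫ y : UnitAddCircle, ∑ k ∈ Finset.Icc 1 (m - 1), f (y - x k)) = 0 := by
      rw [integral_finset_sum _ fun k _ => hintg k]
      simp only [integral_sub_right_eq_self (μ := volume) f, hf_mean]
      simp
    have hle : c ≤ ∫ y : UnitAddCircle, ∑ k ∈ Finset.Icc 1 (m - 1), f (y - x k) := by
      calc c = ∫ _ : UnitAddCircle, c := by
              rw [integral_const]; simp
        _ ≤ _ := by
              apply integral_mono (integrable_const c)
                (integrable_finset_sum _ fun k _ => hintg k)
              intro y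
              exact hgreedy m hm y
    linarith [hI ▸ hle]
  -- symmetry of the summand
  have hsym : ∀ k l : ℕ, f (x k - x l) = f (x l - x k) := by
    intro k l
    rw [← hf_even (x k - x l)]; congr 1; abel
  -- induction on n ≥ M
  induction n with
  | zero => omega
  | succ n ih =>
    rcases Nat.lt_or_ge M (n + 1) with hlt | hge
    · -- n ≥ M, use ih and the greedy bound
      have hMn : M ≤ n := by omega
      have ihn := ih hMn
      have hins : Finset.Icc 1 (n + 1) = insert (n + 1) (Finset.Icc 1 n) := by
        ext m; simp only [Finset.mem_Icc, Finset.mem_insert]; omega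
      have hnot : (n + 1) ∉ Finset.Icc 1 n := by simp
      have hexp : ∑ k ∈ Finset.Icc 1 (n+1), ∑ l ∈ Finset.Icc 1 (n+1), f (x k - x l)
          = (∑ k ∈ Finset.Icc 1 n, ∑ l ∈ Finset.Icc 1 n, f (x k - x l))
            + f 0 + 2 * ∑ k ∈ Finset.Icc 1 n, f (x (n+1) - x k) := by
        rw [hins, Finset.sum_insert hnot, Finset.sum_insert hnot]
        have h1 : ∀ k ∈ Finset.Icc 1 n,
            ∑ l ∈ insert (n + 1) (Finset.Icc 1 n), f (x k - x l)
              = f (x k - x (n+1)) + ∑ l ∈ Finset.Icc 1 n, f (x k - x l) := by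
          intro k _; rw [Finset.sum_insert hnot]
        rw [Finset.sum_congr rfl h1, Finset.sum_add_distrib]
        have h2 : ∑ k ∈ Finset.Icc 1 n, f (x k - x (n+1))
            = ∑ k ∈ Finset.Icc 1 n, f (x (n+1) - x k) :=
          Finset.sum_congr rfl fun k _ => hsym _ _
        have h3 : x (n+1) - x (n+1) = 0 := by abel
        rw [h2, h3]
        ring
      have hkey' : ∑ k ∈ Finset.Icc 1 n, f (x (n+1) - x k) ≤ 0 := by
        have := hkey (n+1) hlt
        simpa using this
      rw [hexp]
      push_cast
      linarith
    · -- n + 1 = M : equality case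
      have heq : M = n + 1 := by omega
      subst heq
      rw [sym_double_sum (fun k l => f (x k - x l)) hsym]
      have hdiag : ∀ k ∈ Finset.Icc 1 (n+1), f (x k - x k) = f 0 := by
        intro k _; congr 1; abel
      rw [Finset.sum_congr rfl hdiag, Finset.sum_const, Nat.card_Icc]
      have h5 : ∑ k ∈ Finset.Icc 1 (n+1), ∑ l ∈ Finset.Ioc k (n+1), f (x k - x l)
          = ∑ k ∈ Finset.Icc 1 (n+1), ∑ l ∈ Finset.Ioc k (n+1), f (x l - x k) :=
        Finset.sum_congr rfl fun k _ => Finset.sum_congr rfl fun l _ => hsym _ _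
      rw [h5]
      simp [nsmul_eq_mul]
end

section
/- Let f : 𝕋 → ℝ be continuous, even, with mean value zero, with Fourier coefficients satisfying f̂(k) ≥ 0 for all k ≠ 0 and ∑_{k∈ℤ} f̂(k) < ∞. Then for any points x_1, …, x_n ∈ 𝕋, sup_{x∈𝕋} |∑_{ℓ=1}^{n} f(x − x_ℓ)| ≤ f(0)^{1/2} · (∑_{m=1}^{n} ∑_{ℓ=1}^{n} f(x_m − x_ℓ))^{1/2}. -/
/-!
Since `f` is even, real and has mean zero, its Fourier coefficients `r k` are real and
nonnegative, and summability makes `f t = ∑ r k e(k t)` hold pointwise. With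
`σ k = ∑_ℓ e(k x_ℓ)` this gives `f 0 = ∑ r k`, `∑_{m,ℓ} f(x_m - x_ℓ) = ∑ r k |σ k|²` and
`∑_ℓ f(y - x_ℓ) = ∑ r k e(k y) conj (σ k)`, so the last sum is at most `∑ r k |σ k|`, and
Cauchy–Schwarz for the weights `r k` bounds that by `(∑ r k)^{1/2} (∑ r k |σ k|²)^{1/2}`.
-/

open MeasureTheory ComplexConjugate

section CauchySchwarz

variable {ι : Type*} {r a : ι → ℝ}

theorem summable_mul_of_summable_mul_sq (hr : ∀ i, 0 ≤ r i) (hrs : Summable r)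
    (hra : Summable fun i => r i * a i ^ 2) : Summable fun i => r i * a i := by
  refine Summable.of_norm_bounded ((hrs.add hra).div_const 2) fun i => ?_
  -- `|a| ≤ (1 + a²) / 2`
  rw [Real.norm_eq_abs, abs_mul, abs_of_nonneg (hr i)]
  nlinarith [hr i, sq_abs (a i), sq_nonneg (|a i| - 1), mul_nonneg (hr i) (sq_nonneg (|a i| - 1))]

theorem le_sqrt_mul_sqrt_of_hasSum (hr : ∀ i, 0 ≤ r i) {A B C : ℝ} (hA : HasSum r A)
    (hB : HasSum (fun i => r i * a i ^ 2) B) (hC : HasSum (fun i => r i * a i) C) :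
    C ≤ √A * √B := by
  refine hasSum_le_of_sum_le hC fun s => ?_
  calc ∑ i ∈ s, r i * a i = ∑ i ∈ s, √(r i) * (√(r i) * a i) := by
        simp_rw [← mul_assoc, Real.mul_self_sqrt (hr _)]
    _ ≤ √(∑ i ∈ s, √(r i) ^ 2) * √(∑ i ∈ s, (√(r i) * a i) ^ 2) :=
        Real.sum_mul_le_sqrt_mul_sqrt s _ _
    _ = √(∑ i ∈ s, r i) * √(∑ i ∈ s, r i * a i ^ 2) := by
        simp_rw [mul_pow, Real.sq_sqrt (hr _)]
    _ ≤ √A * √B := by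
        gcongr
        · exact sum_le_hasSum s (fun i _ => hr i) hA
        · exact sum_le_hasSum s (fun i _ => mul_nonneg (hr i) (sq_nonneg _)) hB

end CauchySchwarz

section FourierCoeff

variable {T : ℝ} [Fact (0 < T)]

theorem fourierCoeff_ofReal_neg (f : AddCircle T → ℝ) (k : ℤ) :
    fourierCoeff (fun t => (f t : ℂ)) (-k) = conj (fourierCoeff (fun t => (f t : ℂ)) k) := by
  simp only [fourierCoeff, smul_eq_mul, ← integral_conj, map_mul, Complex.conj_ofReal,
    ← fourier_neg]

theorem fourierCoeff_neg_of_even {E : Type*} [NormedAddCommGroup E] [NormedSpace ℂ E]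
    (g : AddCircle T → E) (hg : ∀ t, g (-t) = g t) (k : ℤ) :
    fourierCoeff g (-k) = fourierCoeff g k := by
  simp only [fourierCoeff]
  rw [← integral_neg_eq_self]
  simp only [hg, fourier_neg, neg_neg]
  congr 1 with t
  rw [fourier_apply, smul_neg, fourier_neg']

theorem fourierCoeff_ofReal_zero (f : AddCircle T → ℝ) :
    fourierCoeff (fun t => (f t : ℂ)) 0 = ((T⁻¹ * ∫ t, f t : ℝ) : ℂ) := by
  rw [fourierCoeff, AddCircle.integral_haarAddCircle]
  simp only [neg_zero, fourier_zero, one_smul]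
  rw [integral_complex_ofReal, Complex.real_smul, Complex.ofReal_mul, Complex.ofReal_inv]

theorem fourierCoeff_ofReal_eq_re_of_even (f : AddCircle T → ℝ) (hf : ∀ t, f (-t) = f t)
    (k : ℤ) :
    fourierCoeff (fun t => (f t : ℂ)) k = ((fourierCoeff (fun t => (f t : ℂ)) k).re : ℂ) :=
  (Complex.conj_eq_iff_re.mp ((fourierCoeff_ofReal_neg f k).symm.trans
    (fourierCoeff_neg_of_even _ (fun t => by rw [hf]) k))).symm

end FourierCoeff

theorem fourier_sub_apply {T : ℝ} (k : ℤ) (u v : AddCircle T) :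
    fourier k (u - v) = fourier k u * conj (fourier k v) := by
  rw [sub_eq_add_neg, fourier_apply, smul_add, AddCircle.toCircle_add, Circle.coe_mul, smul_neg,
    fourier_neg', ← fourier_apply]

section PositiveDefinite

variable {T : ℝ} {f : AddCircle T → ℝ} {r : ℤ → ℝ}

theorem hasSum_eval_zero_of_hasSum_fourier
    (hf : ∀ t, HasSum (fun k => (r k : ℂ) * fourier k t) (f t)) : HasSum r (f 0) := by
  simpa only [fourier_eval_zero, mul_one, Complex.hasSum_ofReal] using hf 0

theorem hasSum_sum_sub_of_hasSum_fourier
    (hf : ∀ t, HasSum (fun k => (r k : ℂ) * fourier k t) (f t))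
    {ι : Type*} (s : Finset ι) (x : ι → AddCircle T) (u : AddCircle T) :
    HasSum (fun k => (r k : ℂ) * (fourier k u * conj (∑ l ∈ s, fourier k (x l))))
      ↑(∑ l ∈ s, f (u - x l)) := by
  simp only [map_sum, Finset.mul_sum, Complex.ofReal_sum, ← fourier_sub_apply]
  exact hasSum_sum fun l _ => hf (u - x l)

theorem hasSum_energy_of_hasSum_fourier
    (hf : ∀ t, HasSum (fun k => (r k : ℂ) * fourier k t) (f t))
    {ι : Type*} (s : Finset ι) (x : ι → AddCircle T) :
    HasSum (fun k => r k * ‖∑ l ∈ s, fourier k (x l)‖ ^ 2)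
      (∑ m ∈ s, ∑ l ∈ s, f (x m - x l)) := by
  rw [← Complex.hasSum_ofReal, Complex.ofReal_sum]
  convert hasSum_sum fun m _ => hasSum_sum_sub_of_hasSum_fourier hf s x (x m) using 1
  ext k
  rw [← Finset.mul_sum, ← Finset.sum_mul, Complex.mul_conj', Complex.ofReal_mul,
    Complex.ofReal_pow]

theorem abs_sum_sub_le_sqrt_mul_sqrt_of_hasSum_fourier (hr : ∀ k, 0 ≤ r k)
    (hf : ∀ t, HasSum (fun k => (r k : ℂ) * fourier k t) (f t))
    {ι : Type*} (s : Finset ι) (x : ι → AddCircle T) (y : AddCircle T) :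
    |∑ l ∈ s, f (y - x l)| ≤ √(f 0) * √(∑ m ∈ s, ∑ l ∈ s, f (x m - x l)) := by
  have h0 := hasSum_eval_zero_of_hasSum_fourier hf
  have hE := hasSum_energy_of_hasSum_fourier hf s x
  have hsum := summable_mul_of_summable_mul_sq hr h0.summable hE.summable
  have hS : |∑ l ∈ s, f (y - x l)| ≤ ∑' k, r k * ‖∑ l ∈ s, fourier k (x l)‖ := by
    rw [← Real.norm_eq_abs, ← Complex.norm_real]
    refine (hasSum_sum_sub_of_hasSum_fourier hf s x y).norm_le_of_bounded hsum.hasSum fun k => ?_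
    rw [norm_mul, norm_mul, Complex.norm_real, Real.norm_of_nonneg (hr k), fourier_apply,
      Circle.norm_coe, RCLike.norm_conj, one_mul]
  exact hS.trans (le_sqrt_mul_sqrt_of_hasSum hr h0 hE hsum.hasSum)

end PositiveDefinite

/-- For continuous even mean-zero `f : 𝕋 → ℝ` with summable Fourier
coefficients satisfying `f̂(k) ≥ 0` for `k ≠ 0`, and any points `x_1, …, x_n ∈ 𝕋`,
`sup_x |∑_{ℓ=1}^{n} f(x − x_ℓ)| ≤ f(0)^{1/2} · (∑_{m=1}^{n} ∑_{ℓ=1}^{n} f(x_m − x_ℓ))^{1/2}`. -/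
theorem sup_le_sqrt_energy
    (f : UnitAddCircle → ℝ) (hf_cont : Continuous f)
    (hf_even : ∀ t : UnitAddCircle, f (-t) = f t)
    (hf_mean : (∫ t : UnitAddCircle, f t) = 0)
    (hf_sum : Summable fun k : ℤ => ‖fourierCoeff (fun t => (f t : ℂ)) k‖)
    (hf_pos : ∀ k : ℤ, k ≠ 0 → 0 ≤ (fourierCoeff (fun t => (f t : ℂ)) k).re)
    (n : ℕ) (x : ℕ → UnitAddCircle) :
    ∀ y : UnitAddCircle,
      |∑ l ∈ Finset.Icc 1 n, f (y - x l)|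
        ≤ Real.sqrt (f 0) *
          Real.sqrt (∑ m ∈ Finset.Icc 1 n, ∑ l ∈ Finset.Icc 1 n, f (x m - x l)) := by
  intro y
  set c := fourierCoeff fun t => (f t : ℂ)
  have hc_nonneg : ∀ k, 0 ≤ (c k).re := by
    intro k
    rcases eq_or_ne k 0 with rfl | hk
    · simp [c, fourierCoeff_ofReal_zero, hf_mean]
    · exact hf_pos k hk
  have hexp : ∀ t, HasSum (fun k => ((c k).re : ℂ) * fourier k t) (f t) := fun t => by
    convert has_pointwise_sum_fourier_series_of_summable (f := ⟨fun t => (f t : ℂ), by fun_prop⟩)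
      (Summable.of_norm hf_sum) t using 2 with k
    · rw [smul_eq_mul, ← fourierCoeff_ofReal_eq_re_of_even f hf_even]
      rfl
    · rfl
  exact abs_sum_sub_le_sqrt_mul_sqrt_of_hasSum_fourier hc_nonneg hexp _ x y
end

section
/- (Corollary 1) Let f : 𝕋 → ℝ be continuous, even, with mean value zero, with Fourier coefficients satisfying f̂(k) > 0 for all k ≠ 0 and ∑_{k∈ℤ} f̂(k) < ∞, and let (x_n)_{n≥1} be a greedy sequence for f with initial points x_1, …, x_M. Then there is a constant C > 0, depending only on f(0) and the initial points, such that for all n ≥ M, sup_{x∈𝕋} |∑_{ℓ=1}^{n} f(x − x_ℓ)| ≤ C·√n. -/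
/-!
Write `f(t) = ∑ₖ aₖ e(kt)` with `aₖ ≥ 0` (the coefficients are real since `f` is even, and
`a₀ = 0`), so `∑ₖ aₖ = f 0`. For points `p₁, …, pₙ` with Weyl sums `Wₖ = ∑ₗ e(k pₗ)`, the
potential `∑ₗ f(y - pₗ)` equals `∑ₖ aₖ e(ky) conj Wₖ`, and the energy `∑ₘ ∑ₗ f(pₘ - pₗ)` equals
`∑ₖ aₖ |Wₖ|²`. Cauchy–Schwarz bounds the potential by `√(f 0) · √energy`. Since the potential has
mean zero, it takes a nonpositive value, so the greedy point `x_{n+1}` makes the cross term of the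
energy nonpositive: the energy grows by at most `f 0` per step, hence linearly in `n`.
-/

open MeasureTheory Finset ComplexConjugate

section CauchySchwarz

variable {ι : Type*} {f g : ι → ℝ}

lemma Real.summable_sqrt_mul_sqrt (hf₀ : ∀ i, 0 ≤ f i) (hg₀ : ∀ i, 0 ≤ g i)
    (hf : Summable f) (hg : Summable g) : Summable fun i => √(f i) * √(g i) :=
  (hf.add hg).of_nonneg_of_le (fun _ => by positivity) fun i => by
    nlinarith [sq_nonneg (√(f i) - √(g i)), Real.sq_sqrt (hf₀ i), Real.sq_sqrt (hg₀ i)]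

lemma Real.tsum_sqrt_mul_sqrt_le (hf₀ : ∀ i, 0 ≤ f i) (hg₀ : ∀ i, 0 ≤ g i)
    (hf : Summable f) (hg : Summable g) :
    ∑' i, √(f i) * √(g i) ≤ √(∑' i, f i) * √(∑' i, g i) :=
  Summable.tsum_le_of_sum_le (Real.summable_sqrt_mul_sqrt hf₀ hg₀ hf hg) fun s =>
    (Real.sum_sqrt_mul_sqrt_le s hf₀ hg₀).trans <| by
      gcongr
      · exact hf.sum_le_tsum s fun i _ => hf₀ i
      · exact hg.sum_le_tsum s fun i _ => hg₀ i

end CauchySchwarz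

section Energy

variable {G ι : Type*} [AddGroup G]

def energy (f : G → ℝ) (s : Finset ι) (p : ι → G) : ℝ :=
  ∑ m ∈ s, ∑ l ∈ s, f (p m - p l)

lemma energy_insert [DecidableEq ι] {f : G → ℝ} (hf : ∀ t, f (-t) = f t) {s : Finset ι}
    {j : ι} (hj : j ∉ s) (p : ι → G) :
    energy f (insert j s) p = energy f s p + 2 * ∑ l ∈ s, f (p j - p l) + f 0 := by
  have hsymm : ∀ m, f (p m - p j) = f (p j - p m) := fun m => by rw [← hf, neg_sub]
  simp only [energy, sum_insert hj, sub_self, hsymm, sum_add_distrib]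
  ring

end Energy

section Fourier

variable {T : ℝ}

lemma fourier_apply_neg (k : ℤ) (t : AddCircle T) : fourier k (-t) = conj (fourier k t) := by
  rw [fourier_apply, smul_neg, fourier_neg']

lemma fourier_apply_sub (k : ℤ) (a b : AddCircle T) :
    fourier k (a - b) = fourier k a * conj (fourier k b) := by
  rw [sub_eq_add_neg, ← fourier_apply_neg]
  simp [fourier_apply, smul_add, AddCircle.toCircle_add]

lemma fourierCoeff_zero [Fact (0 < T)] (f : AddCircle T → ℂ) :
    fourierCoeff f 0 = T⁻¹ • ∫ t, f t := by
  simp [fourierCoeff, AddCircle.integral_haarAddCircle]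

lemma conj_fourierCoeff_of_even [Fact (0 < T)] {f : AddCircle T → ℝ}
    (hf : ∀ t, f (-t) = f t) (k : ℤ) :
    conj (fourierCoeff (fun t => (f t : ℂ)) k) = fourierCoeff (fun t => (f t : ℂ)) k := by
  rw [fourierCoeff, ← integral_conj, ← integral_neg_eq_self _ AddCircle.haarAddCircle]
  congr 1; ext t
  simp [hf]

lemma hasSum_fourier_re_of_even [Fact (0 < T)] {f : AddCircle T → ℝ} (hf : Continuous f)
    (hf_even : ∀ t, f (-t) = f t) (hsum : Summable (fourierCoeff fun t => (f t : ℂ)))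
    (t : AddCircle T) :
    HasSum (fun k => ((fourierCoeff (fun t => (f t : ℂ)) k).re : ℂ) * fourier k t) (f t) := by
  simp only [Complex.conj_eq_iff_re.mp (conj_fourierCoeff_of_even hf_even _)]
  exact has_pointwise_sum_fourier_series_of_summable
    (f := ⟨_, Complex.continuous_ofReal.comp hf⟩) hsum t

noncomputable def weylSum {ι : Type*} (k : ℤ) (s : Finset ι) (p : ι → AddCircle T) : ℂ :=
  ∑ l ∈ s, fourier k (p l)

variable {ι : Type*} {f : AddCircle T → ℝ} {a : ℤ → ℝ}
  (hf : ∀ t, HasSum (fun k => (a k : ℂ) * fourier k t) (f t))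
include hf

lemma hasSum_sum_sub (s : Finset ι) (p : ι → AddCircle T) (y : AddCircle T) :
    HasSum (fun k => (a k : ℂ) * fourier k y * conj (weylSum k s p))
      (∑ l ∈ s, f (y - p l) : ℝ) := by
  simp only [weylSum, map_sum, mul_sum, Complex.ofReal_sum]
  refine hasSum_sum fun l _ => ?_
  simpa only [fourier_apply_sub, mul_assoc] using hf (y - p l)

lemma hasSum_energy (s : Finset ι) (p : ι → AddCircle T) :
    HasSum (fun k => a k * ‖weylSum k s p‖ ^ 2) (energy f s p) := by
  refine Complex.hasSum_ofReal.mp ?_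
  have h := hasSum_sum (s := s) fun m _ => hasSum_sum_sub hf s p (p m)
  simp only [energy, Complex.ofReal_sum] at h ⊢
  convert h using 2 with k
  rw [← sum_mul, ← mul_sum, ← weylSum, mul_assoc, Complex.mul_conj']
  push_cast
  ring

lemma hasSum_eval_zero : HasSum a (f 0) := by
  have h := hf 0
  simp only [fourier_eval_zero, mul_one] at h
  exact Complex.hasSum_ofReal.mp h

lemma abs_sum_sub_le_sqrt_mul_sqrt_energy (ha : ∀ k, 0 ≤ a k) (s : Finset ι)
    (p : ι → AddCircle T) (y : AddCircle T) :
    |∑ l ∈ s, f (y - p l)| ≤ √(f 0) * √(energy f s p) := by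
  have hE := hasSum_energy hf s p
  have h0 := hasSum_eval_zero hf
  have hE₀ : ∀ k, 0 ≤ a k * ‖weylSum k s p‖ ^ 2 := fun k => by have := ha k; positivity
  have hterm : ∀ k, ‖(a k : ℂ) * fourier k y * conj (weylSum k s p)‖
      = √(a k) * √(a k * ‖weylSum k s p‖ ^ 2) := fun k => by
    rw [Real.sqrt_mul (ha k), ← mul_assoc, Real.mul_self_sqrt (ha k),
      Real.sqrt_sq (norm_nonneg _)]
    simp [abs_of_nonneg (ha k), Circle.norm_coe]
  rw [← Real.norm_eq_abs, ← Complex.norm_real, ← h0.tsum_eq, ← hE.tsum_eq]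
  refine ((hasSum_sum_sub hf s p y).norm_le_of_bounded
    (Real.summable_sqrt_mul_sqrt ha hE₀ h0.summable hE.summable).hasSum
    fun k => (hterm k).le).trans ?_
  exact Real.tsum_sqrt_mul_sqrt_le ha hE₀ h0.summable hE.summable

end Fourier

section Greedy

variable {G : Type*} [TopologicalSpace G] [AddGroup G] [IsTopologicalAddGroup G]
  [CompactSpace G] [MeasurableSpace G] [BorelSpace G] {μ : Measure G} [IsProbabilityMeasure μ]
  [μ.IsAddRightInvariant] {f : G → ℝ}

lemma exists_sum_sub_nonpos (hf : Continuous f) (hmean : ∫ t, f t ∂μ = 0)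
    {ι : Type*} (s : Finset ι) (p : ι → G) : ∃ y, ∑ l ∈ s, f (y - p l) ≤ 0 := by
  have hint : ∀ l ∈ s, Integrable (fun y => f (y - p l)) μ := fun l _ =>
    (hf.comp (continuous_sub_right (p l))).integrable_of_hasCompactSupport
      (HasCompactSupport.of_compactSpace _)
  obtain ⟨y, hy⟩ := exists_le_integral (integrable_finsetSum s hint)
  refine ⟨y, hy.trans_eq ?_⟩
  simp [integral_finsetSum s hint, integral_sub_right_eq_self, hmean]

/-- The sequence is indexed from `1`, with `x 1, …, x M` the initial points; `x 0` is unused. -/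
def IsGreedySeq (f : G → ℝ) (M : ℕ) (x : ℕ → G) : Prop :=
  ∀ n, M < n → ∀ y, ∑ k ∈ Icc 1 (n - 1), f (x n - x k) ≤ ∑ k ∈ Icc 1 (n - 1), f (y - x k)

variable {M : ℕ} {x : ℕ → G}

lemma IsGreedySeq.energy_succ_le (hgreedy : IsGreedySeq f M x) (hf : Continuous f)
    (hf_even : ∀ t, f (-t) = f t) (hmean : ∫ t, f t ∂μ = 0) {n : ℕ} (hn : M ≤ n) :
    energy f (Icc 1 (n + 1)) x ≤ energy f (Icc 1 n) x + f 0 := by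
  obtain ⟨y, hy⟩ := exists_sum_sub_nonpos hf hmean (Icc 1 n) x
  have hstep := hgreedy (n + 1) (by omega) y
  rw [Nat.add_sub_cancel] at hstep
  rw [← insert_Icc_right_eq_Icc_add_one (by omega), energy_insert hf_even (by simp)]
  linarith

lemma IsGreedySeq.energy_le (hgreedy : IsGreedySeq f M x) (hf : Continuous f)
    (hf_even : ∀ t, f (-t) = f t) (hmean : ∫ t, f t ∂μ = 0) (hf₀ : 0 ≤ f 0)
    (hE₀ : 0 ≤ energy f (Icc 1 M) x) {n : ℕ} (hn : M ≤ n) :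
    energy f (Icc 1 n) x ≤ (energy f (Icc 1 M) x + f 0) * n := by
  induction n, hn using Nat.le_induction with
  | base =>
    rcases M.eq_zero_or_pos with rfl | hM
    · simp [energy]
    · have : (1 : ℝ) ≤ M := by exact_mod_cast hM
      nlinarith
  | succ n hn ih =>
    have := hgreedy.energy_succ_le hf hf_even hmean hn
    push_cast
    linarith

end Greedy

theorem sup_le_sqrt_n_general
    (f : UnitAddCircle → ℝ) (hf_cont : Continuous f)
    (hf_even : ∀ t : UnitAddCircle, f (-t) = f t)
    (hf_mean : (∫ t : UnitAddCircle, f t) = 0)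
    (hf_sum : Summable fun k : ℤ => ‖fourierCoeff (fun t => (f t : ℂ)) k‖)
    (hf_pos : ∀ k : ℤ, k ≠ 0 → 0 < (fourierCoeff (fun t => (f t : ℂ)) k).re)
    (M : ℕ) (x : ℕ → UnitAddCircle)
    (hgreedy : ∀ n : ℕ, M < n → ∀ y : UnitAddCircle,
      ∑ k ∈ Finset.Icc 1 (n - 1), f (x n - x k) ≤ ∑ k ∈ Finset.Icc 1 (n - 1), f (y - x k)) :
    ∃ C > 0, ∀ n : ℕ, M ≤ n → ∀ y : UnitAddCircle,
      |∑ l ∈ Finset.Icc 1 n, f (y - x l)| ≤ C * Real.sqrt n := by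
  have : IsProbabilityMeasure (volume : Measure UnitAddCircle) := ⟨by simp⟩
  have hexp := hasSum_fourier_re_of_even hf_cont hf_even hf_sum.of_norm
  have ha : ∀ k, 0 ≤ (fourierCoeff (fun t => (f t : ℂ)) k).re := fun k => by
    rcases eq_or_ne k 0 with rfl | hk
    · simp [fourierCoeff_zero, integral_complex_ofReal, hf_mean]
    · exact (hf_pos k hk).le
  have hf₀ : 0 ≤ f 0 := (hasSum_eval_zero hexp).nonneg ha
  set E : ℕ → ℝ := fun n => energy f (Icc 1 n) x
  have hE₀ : ∀ n, 0 ≤ E n := fun n => (hasSum_energy hexp _ x).nonneg fun k => by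
    have := ha k; positivity
  refine ⟨√(f 0) * √(E M + f 0) + 1, by positivity, fun n hn y => ?_⟩
  have hE : E n ≤ (E M + f 0) * n :=
    IsGreedySeq.energy_le hgreedy hf_cont hf_even hf_mean hf₀ (hE₀ M) hn
  calc |∑ l ∈ Icc 1 n, f (y - x l)|
      ≤ √(f 0) * √(E n) := abs_sum_sub_le_sqrt_mul_sqrt_energy hexp ha _ x y
    _ ≤ √(f 0) * √((E M + f 0) * n) := by gcongr
    _ = √(f 0) * √(E M + f 0) * √n := by rw [Real.sqrt_mul (by linarith [hE₀ M]), mul_assoc]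
    _ ≤ (√(f 0) * √(E M + f 0) + 1) * √n := by gcongr; linarith

/-- Corollary 1: For continuous even mean-zero `f : 𝕋 → ℝ` with summable
Fourier coefficients, `f̂(k) > 0` for `k ≠ 0`, and a greedy sequence `(x_n)` for `f`,
there is `C > 0` such that for all `n ≥ M`, `sup_x |∑_{ℓ=1}^{n} f(x − x_ℓ)| ≤ C·√n`. -/
theorem sup_le_sqrt_n
    (f : UnitAddCircle → ℝ) (hf_cont : Continuous f)
    (hf_even : ∀ t : UnitAddCircle, f (-t) = f t)
    (hf_mean : (∫ t : UnitAddCircle, f t) = 0)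
    (hf_sum : Summable fun k : ℤ => ‖fourierCoeff (fun t => (f t : ℂ)) k‖)
    (hf_pos : ∀ k : ℤ, k ≠ 0 → 0 < (fourierCoeff (fun t => (f t : ℂ)) k).re)
    (M : ℕ) (hM : 1 ≤ M) (x : ℕ → UnitAddCircle)
    (hgreedy : ∀ n : ℕ, M < n → ∀ y : UnitAddCircle,
      ∑ k ∈ Finset.Icc 1 (n - 1), f (x n - x k) ≤ ∑ k ∈ Finset.Icc 1 (n - 1), f (y - x k)) :
    ∃ C > 0, ∀ n : ℕ, M ≤ n → ∀ y : UnitAddCircle,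
      |∑ l ∈ Finset.Icc 1 n, f (y - x l)| ≤ C * Real.sqrt n :=
  sup_le_sqrt_n_general f hf_cont hf_even hf_mean hf_sum hf_pos M x hgreedy
end

section
/- (Corollary 2, in its Ḣ^{−1} form, which bounds the 2-Wasserstein distance of the empirical measure to Lebesgue measure via Peyré's inequality) Let f : 𝕋 → ℝ be continuous, even, with mean value zero, with Fourier coefficients satisfying f̂(k) ≥ c·|k|^{−2} for all k ≠ 0 (for some fixed c > 0) and ∑_{k∈ℤ} f̂(k) < ∞. Then for any points x_1, …, x_n ∈ 𝕋, c · ∑_{k∈ℤ, k≠0} |k|^{−2} · |(1/n)·∑_{m=1}^{n} e^{2πik x_m}|² ≤ (1/n²) · ∑_{k=1}^{n} ∑_{ℓ=1}^{n} f(x_k − x_ℓ). -/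
open MeasureTheory Filter ComplexConjugate

/-!
Expanding `f` in its absolutely convergent Fourier series turns the energy into
`∑ k, ∑ l, f (x k - x l) = ∑ m, f̂(m) |∑ j, e(m x j)|²`, since `e(m (a - b)) = e(m a) conj (e(m b))`.
The mean-zero condition kills the term `m = 0`, and the remaining terms dominate
`c m⁻² |∑ j, e(m x j)|²` one by one.
-/

section FourierSeries

variable {T : ℝ}

theorem fourier_sub (m : ℤ) (a b : AddCircle T) :
    fourier m (a - b) = fourier m a * conj (fourier m b) := by
  rw [sub_eq_add_neg, fourier_apply, smul_add, AddCircle.toCircle_add, Circle.coe_mul, smul_neg,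
    fourier_neg', ← fourier_apply]

theorem sum_sum_fourier_sub {ι : Type*} (s : Finset ι) (x : ι → AddCircle T) (m : ℤ) :
    ∑ k ∈ s, ∑ l ∈ s, fourier m (x k - x l) = ((‖∑ j ∈ s, fourier m (x j)‖ ^ 2 : ℝ) : ℂ) := by
  simp only [fourier_sub, ← Finset.mul_sum, ← map_sum, ← Finset.sum_mul, Complex.ofReal_pow,
    Complex.mul_conj']

variable [Fact (0 < T)]

theorem fourierCoeff_zero_eq_smul_integral {E : Type*} [NormedAddCommGroup E] [NormedSpace ℂ E]
    (f : AddCircle T → E) : fourierCoeff f 0 = T⁻¹ • ∫ t, f t := by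
  simp [fourierCoeff, AddCircle.integral_haarAddCircle]

theorem hasSum_fourierCoeff_mul_norm_sum_fourier_sq {f : C(AddCircle T, ℂ)}
    (hf : Summable (fourierCoeff f)) {ι : Type*} (s : Finset ι) (x : ι → AddCircle T) :
    HasSum (fun m => fourierCoeff f m * ((‖∑ j ∈ s, fourier m (x j)‖ ^ 2 : ℝ) : ℂ))
      (∑ k ∈ s, ∑ l ∈ s, f (x k - x l)) := by
  have := hasSum_sum fun k (_ : k ∈ s) => hasSum_sum fun l (_ : l ∈ s) =>
    has_pointwise_sum_fourier_series_of_summable hf (x k - x l)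
  simpa only [smul_eq_mul, ← Finset.mul_sum, sum_sum_fourier_sub] using this

theorem hasSum_re_fourierCoeff_mul_norm_sum_fourier_sq {f : AddCircle T → ℝ} (hf : Continuous f)
    (hf_sum : Summable (fourierCoeff fun t => (f t : ℂ))) {ι : Type*} (s : Finset ι)
    (x : ι → AddCircle T) :
    HasSum (fun m => (fourierCoeff (fun t => (f t : ℂ)) m).re * ‖∑ j ∈ s, fourier m (x j)‖ ^ 2)
      (∑ k ∈ s, ∑ l ∈ s, f (x k - x l)) := by
  have := Complex.hasSum_re <|
    hasSum_fourierCoeff_mul_norm_sum_fourier_sq (f := ⟨fun t => (f t : ℂ), by fun_prop⟩)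
      hf_sum s x
  simpa only [ContinuousMap.coe_mk, Complex.re_mul_ofReal, Complex.re_sum, Complex.ofReal_re]
    using this

end FourierSeries

theorem mul_tsum_one_div_sq_mul_le_of_hasSum {F w : ℤ → ℝ} {E c : ℝ} (hc : 0 ≤ c)
    (hw : ∀ m, 0 ≤ w m) (hF_zero : F 0 = 0) (hF : ∀ k : ℤ, k ≠ 0 → c / (k : ℝ) ^ 2 ≤ F k)
    (h : HasSum (fun m => F m * w m) E) :
    c * ∑' k : {k : ℤ // k ≠ 0}, 1 / ((k : ℤ) : ℝ) ^ 2 * w k ≤ E := by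
  have h_ne : HasSum (fun k : {k : ℤ // k ≠ 0} => F k * w k) E := by
    refine (hasSum_subtype_iff_of_support_subset fun m hm => ?_).mpr h
    rintro rfl
    simp [hF_zero] at hm
  have h_le (k : {k : ℤ // k ≠ 0}) : c * (1 / (k : ℝ) ^ 2 * w k) ≤ F k * w k := by
    rw [← mul_assoc, mul_one_div]
    exact mul_le_mul_of_nonneg_right (hF k k.2) (hw k)
  have h_nonneg (k : {k : ℤ // k ≠ 0}) : 0 ≤ c * (1 / (k : ℝ) ^ 2 * w k) := by
    have := hw k
    positivity
  rw [← tsum_mul_left]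
  exact hasSum_le h_le (h_ne.summable.of_nonneg_of_le h_nonneg h_le).hasSum h_ne

theorem sobolev_le_energy_general
    (f : UnitAddCircle → ℝ) (hf_cont : Continuous f)
    (hf_mean : (∫ t : UnitAddCircle, f t) = 0)
    (hf_sum : Summable fun k : ℤ => ‖fourierCoeff (fun t => (f t : ℂ)) k‖)
    (c : ℝ) (hc : 0 < c)
    (hf_lb : ∀ k : ℤ, k ≠ 0 → c / (k : ℝ) ^ 2 ≤ (fourierCoeff (fun t => (f t : ℂ)) k).re)
    (n : ℕ) (x : ℕ → UnitAddCircle) :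
    c * ∑' k : {k : ℤ // k ≠ 0}, (1 : ℝ) / ((k : ℤ) : ℝ) ^ 2 *
        ‖(1 / (n : ℂ)) * ∑ m ∈ Finset.Icc 1 n, fourier (k : ℤ) (x m)‖ ^ 2
      ≤ (1 / (n : ℝ) ^ 2) * ∑ k ∈ Finset.Icc 1 n, ∑ l ∈ Finset.Icc 1 n, f (x k - x l) := by
  have hF_zero : (fourierCoeff (fun t => (f t : ℂ)) 0).re = 0 := by
    simp [fourierCoeff_zero_eq_smul_integral, integral_complex_ofReal, hf_mean]
  refine mul_tsum_one_div_sq_mul_le_of_hasSum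
    (w := fun m => ‖(1 / (n : ℂ)) * ∑ j ∈ Finset.Icc 1 n, fourier m (x j)‖ ^ 2)
    hc.le (fun _ => by positivity) hF_zero hf_lb ?_
  have h := (hasSum_re_fourierCoeff_mul_norm_sum_fourier_sq hf_cont hf_sum.of_norm
    (Finset.Icc 1 n) x).mul_left (1 / (n : ℝ) ^ 2)
  simpa only [norm_mul, mul_pow, norm_div, norm_one, Complex.norm_natCast, div_pow, one_pow,
    mul_left_comm] using h

/-- Corollary 2, Ḣ^{−1} form: For continuous even mean-zero `f : 𝕋 → ℝ`
with summable Fourier coefficients satisfying `f̂(k) ≥ c·|k|^{−2}` for `k ≠ 0`, and any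
points `x_1, …, x_n ∈ 𝕋`,
`c · ∑_{k≠0} |k|^{−2} · |(1/n)·∑_{m=1}^{n} e^{2πik x_m}|² ≤ (1/n²)·∑_{k,ℓ=1}^{n} f(x_k − x_ℓ)`. -/
theorem sobolev_le_energy
    (f : UnitAddCircle → ℝ) (hf_cont : Continuous f)
    (hf_even : ∀ t : UnitAddCircle, f (-t) = f t)
    (hf_mean : (∫ t : UnitAddCircle, f t) = 0)
    (hf_sum : Summable fun k : ℤ => ‖fourierCoeff (fun t => (f t : ℂ)) k‖)
    (c : ℝ) (hc : 0 < c)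
    (hf_lb : ∀ k : ℤ, k ≠ 0 → c / (k : ℝ) ^ 2 ≤ (fourierCoeff (fun t => (f t : ℂ)) k).re)
    (n : ℕ) (x : ℕ → UnitAddCircle) :
    c * ∑' k : {k : ℤ // k ≠ 0}, (1 : ℝ) / ((k : ℤ) : ℝ) ^ 2 *
        ‖(1 / (n : ℂ)) * ∑ m ∈ Finset.Icc 1 n, fourier (k : ℤ) (x m)‖ ^ 2
      ≤ (1 / (n : ℝ) ^ 2) * ∑ k ∈ Finset.Icc 1 n, ∑ l ∈ Finset.Icc 1 n, f (x k - x l) :=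
  sobolev_le_energy_general f hf_cont hf_mean hf_sum c hc hf_lb n x
end

section
/- Let f : 𝕋 → ℝ be continuous, even, with mean value zero, with Fourier coefficients satisfying f̂(k) ≥ 0 for all k ≠ 0 and ∑_{k∈ℤ} f̂(k) < ∞, and let (x_n)_{n≥1} be a greedy sequence for f with initial points x_1, …, x_M. Then there is a constant C ≥ 0, depending only on the initial points and f, such that for every k ≠ 0 with f̂(k) > 0 and every n ≥ M, |∑_{m=1}^{n} e^{2πik x_m}|² ≤ (n·f(0) + C)/f̂(k). -/
open MeasureTheory

/-!
Expanding `f` in its absolutely convergent Fourier series, the energy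
`E(n) = ∑_{m,l ≤ n} f(x_m - x_l)` equals `∑_k Re f̂(k) |∑_{m ≤ n} e^{2πik x_m}|²`, a sum of
nonnegative terms once `f̂(0) = 0`; so each single term is at most `E(n)`. On the other hand
`f` has mean zero, so the potential `y ↦ ∑_{m ≤ n} f(y - x_m)` takes a nonpositive value, and the
greedy point `x_{n+1}` minimises it. Since `f` is even this gives `E(n+1) ≤ E(n) + f(0)`, hence
`E(n) ≤ n f(0) + C`.
-/

open ComplexConjugate Finset

-- Points are indexed from `1`, as in the paper: `x 0` plays no role.
def IsGreedyFrom {G : Type*} [AddGroup G] (f : G → ℝ) (M : ℕ) (x : ℕ → G) : Prop :=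
  ∀ n : ℕ, M < n → ∀ y : G,
    ∑ k ∈ Icc 1 (n - 1), f (x n - x k) ≤ ∑ k ∈ Icc 1 (n - 1), f (y - x k)

def pairEnergy {G : Type*} [AddGroup G] (f : G → ℝ) (x : ℕ → G) (n : ℕ) : ℝ :=
  ∑ m ∈ Icc 1 n, ∑ l ∈ Icc 1 n, f (x m - x l)

theorem pairEnergy_succ {G : Type*} [AddGroup G] {f : G → ℝ} (heven : ∀ t, f (-t) = f t)
    (x : ℕ → G) (n : ℕ) :
    pairEnergy f x (n + 1) = pairEnergy f x n + f 0 + 2 * ∑ m ∈ Icc 1 n, f (x (n + 1) - x m) := by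
  have hsplit : Icc 1 (n + 1) = insert (n + 1) (Icc 1 n) := by
    ext m; simp only [mem_Icc, mem_insert]; omega
  have hnot : n + 1 ∉ Icc 1 n := by simp
  have hsymm : ∑ m ∈ Icc 1 n, f (x m - x (n + 1)) = ∑ m ∈ Icc 1 n, f (x (n + 1) - x m) :=
    sum_congr rfl fun m _ => by rw [← neg_sub, heven]
  simp only [pairEnergy, hsplit, sum_insert hnot, sum_add_distrib, sub_self, hsymm]
  ring

theorem le_mul_add_of_succ_le_add {u : ℕ → ℝ} {a : ℝ} {M : ℕ}
    (h : ∀ n, M ≤ n → u (n + 1) ≤ u n + a) :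
    ∃ C, 0 ≤ C ∧ ∀ n, M ≤ n → u n ≤ n * a + C := by
  refine ⟨max (u M - M * a) 0, le_max_right _ _, fun n hn => ?_⟩
  induction n, hn using Nat.le_induction with
  | base => linarith [le_max_left (u M - M * a) 0]
  | succ n hn ih => push_cast; linarith [h n hn]

namespace AddCircle

variable {T : ℝ}

theorem fourier_sub_apply (k : ℤ) (a b : AddCircle T) :
    fourier k (a - b) = fourier k a * conj (fourier k b) := by
  rw [← fourier_neg, fourier_apply, fourier_apply, fourier_apply, smul_sub, neg_smul,
    sub_eq_add_neg, toCircle_add, Circle.coe_mul]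

variable [Fact (0 < T)]

theorem fourierCoeff_ofReal_zero (f : AddCircle T → ℝ) :
    fourierCoeff (fun t => (f t : ℂ)) 0 = ((T⁻¹ * ∫ t, f t : ℝ) : ℂ) := by
  simp only [fourierCoeff, neg_zero, fourier_zero, one_smul]
  rw [integral_complex_ofReal, integral_haarAddCircle, smul_eq_mul]

theorem hasSum_re_fourierCoeff_mul_norm_sq {f : AddCircle T → ℝ} (hf : Continuous f)
    (hsum : Summable (fourierCoeff fun t => (f t : ℂ))) {ι : Type*} (s : Finset ι)
    (p : ι → AddCircle T) :
    HasSum (fun k => (fourierCoeff (fun t => (f t : ℂ)) k).re * ‖∑ i ∈ s, fourier k (p i)‖ ^ 2)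
      (∑ i ∈ s, ∑ j ∈ s, f (p i - p j)) := by
  set c := fourierCoeff fun t => (f t : ℂ)
  have hpt (t : AddCircle T) : HasSum (fun k => c k * fourier k t) (f t : ℂ) :=
    has_pointwise_sum_fourier_series_of_summable
      (f := ⟨fun t => (f t : ℂ), Complex.continuous_ofReal.comp hf⟩) hsum t
  have hterm (k : ℤ) : ∑ i ∈ s, ∑ j ∈ s, c k * fourier k (p i - p j)
      = c k * (‖∑ i ∈ s, fourier k (p i)‖ ^ 2 : ℝ) := by
    simp_rw [fourier_sub_apply, ← mul_sum, ← sum_mul, ← map_sum]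
    rw [Complex.mul_conj, Complex.normSq_eq_norm_sq]
  have h := (hasSum_sum (s := s) fun i _ =>
    hasSum_sum (s := s) fun j _ => hpt (p i - p j)).mapL Complex.reCLM
  simpa only [hterm, Complex.reCLM_apply, Complex.re_mul_ofReal, Complex.re_sum,
    Complex.ofReal_re] using h

theorem re_fourierCoeff_mul_norm_sq_le {f : AddCircle T → ℝ} (hf : Continuous f)
    (hsum : Summable (fourierCoeff fun t => (f t : ℂ)))
    (hpos : ∀ k, 0 ≤ (fourierCoeff (fun t => (f t : ℂ)) k).re) {ι : Type*} (s : Finset ι)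
    (p : ι → AddCircle T) (k : ℤ) :
    (fourierCoeff (fun t => (f t : ℂ)) k).re * ‖∑ i ∈ s, fourier k (p i)‖ ^ 2
      ≤ ∑ i ∈ s, ∑ j ∈ s, f (p i - p j) :=
  le_hasSum (hasSum_re_fourierCoeff_mul_norm_sq hf hsum s p) k fun j _ =>
    mul_nonneg (hpos j) (sq_nonneg _)

theorem exists_sum_sub_nonpos {f : AddCircle T → ℝ} (hf : Continuous f)
    (hmean : ∫ t, f t = 0) {ι : Type*} (s : Finset ι) (p : ι → AddCircle T) :
    ∃ y, ∑ i ∈ s, f (y - p i) ≤ 0 := by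
  have hcont (i : ι) : Continuous fun y => f (y - p i) := hf.comp (continuous_sub_right _)
  have hint (i : ι) : Integrable fun y => f (y - p i) :=
    (hcont i).integrable_of_hasCompactSupport (.of_compactSpace _)
  have hzero : ∫ y, ∑ i ∈ s, f (y - p i) ∂haarAddCircle = 0 := by
    rw [integral_haarAddCircle, integral_finsetSum _ fun i _ => hint i]
    simp [integral_sub_right_eq_self, hmean]
  obtain ⟨y, hy⟩ := exists_le_integral (μ := haarAddCircle)
    ((continuous_finsetSum s fun i _ => hcont i).integrable_of_hasCompactSupport
      (.of_compactSpace _))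
  exact ⟨y, hzero ▸ hy⟩

theorem pairEnergy_succ_le_of_isGreedyFrom {f : AddCircle T → ℝ} (hf : Continuous f)
    (heven : ∀ t, f (-t) = f t) (hmean : ∫ t, f t = 0) {M : ℕ} {x : ℕ → AddCircle T}
    (hgreedy : IsGreedyFrom f M x) {n : ℕ} (hn : M ≤ n) :
    pairEnergy f x (n + 1) ≤ pairEnergy f x n + f 0 := by
  obtain ⟨y, hy⟩ := exists_sum_sub_nonpos hf hmean (Icc 1 n) x
  have hnext := hgreedy (n + 1) (by omega) y
  rw [Nat.add_sub_cancel] at hnext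
  rw [pairEnergy_succ heven]
  linarith

end AddCircle

theorem exponential_sum_bound_general
    (f : UnitAddCircle → ℝ) (hf_cont : Continuous f)
    (hf_even : ∀ t : UnitAddCircle, f (-t) = f t)
    (hf_mean : (∫ t : UnitAddCircle, f t) = 0)
    (hf_sum : Summable fun k : ℤ => ‖fourierCoeff (fun t => (f t : ℂ)) k‖)
    (hf_pos : ∀ k : ℤ, k ≠ 0 → 0 ≤ (fourierCoeff (fun t => (f t : ℂ)) k).re)
    (M : ℕ) (x : ℕ → UnitAddCircle)
    (hgreedy : ∀ n : ℕ, M < n → ∀ y : UnitAddCircle,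
      ∑ k ∈ Finset.Icc 1 (n - 1), f (x n - x k) ≤ ∑ k ∈ Finset.Icc 1 (n - 1), f (y - x k)) :
    ∃ C : ℝ, 0 ≤ C ∧ ∀ k : ℤ, k ≠ 0 → 0 < (fourierCoeff (fun t => (f t : ℂ)) k).re →
      ∀ n : ℕ, M ≤ n →
        ‖∑ m ∈ Finset.Icc 1 n, fourier k (x m)‖ ^ 2
          ≤ ((n : ℝ) * f 0 + C) / (fourierCoeff (fun t => (f t : ℂ)) k).re := by
  have hpos : ∀ k, 0 ≤ (fourierCoeff (fun t => (f t : ℂ)) k).re := by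
    intro k
    rcases eq_or_ne k 0 with rfl | hk
    · simp [AddCircle.fourierCoeff_ofReal_zero, hf_mean]
    · exact hf_pos k hk
  obtain ⟨C, hC, hE⟩ := le_mul_add_of_succ_le_add fun n hn =>
    AddCircle.pairEnergy_succ_le_of_isGreedyFrom hf_cont hf_even hf_mean hgreedy hn
  refine ⟨C, hC, fun k _ hk n hn => ?_⟩
  rw [le_div_iff₀ hk, mul_comm]
  exact (AddCircle.re_fourierCoeff_mul_norm_sq_le hf_cont (.of_norm hf_sum) hpos _ x k).trans
    (hE n hn)

/-- For continuous even mean-zero `f : 𝕋 → ℝ` with summable Fourier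
coefficients, `f̂(k) ≥ 0` for `k ≠ 0`, and a greedy sequence `(x_n)` for `f`, there is a
constant `C ≥ 0` such that for every `k ≠ 0` with `f̂(k) > 0` and every `n ≥ M`,
`|∑_{m=1}^{n} e^{2πik x_m}|² ≤ (n·f(0) + C)/f̂(k)`. -/
theorem exponential_sum_bound
    (f : UnitAddCircle → ℝ) (hf_cont : Continuous f)
    (hf_even : ∀ t : UnitAddCircle, f (-t) = f t)
    (hf_mean : (∫ t : UnitAddCircle, f t) = 0)
    (hf_sum : Summable fun k : ℤ => ‖fourierCoeff (fun t => (f t : ℂ)) k‖)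
    (hf_pos : ∀ k : ℤ, k ≠ 0 → 0 ≤ (fourierCoeff (fun t => (f t : ℂ)) k).re)
    (M : ℕ) (hM : 1 ≤ M) (x : ℕ → UnitAddCircle)
    (hgreedy : ∀ n : ℕ, M < n → ∀ y : UnitAddCircle,
      ∑ k ∈ Finset.Icc 1 (n - 1), f (x n - x k) ≤ ∑ k ∈ Finset.Icc 1 (n - 1), f (y - x k)) :
    ∃ C : ℝ, 0 ≤ C ∧ ∀ k : ℤ, k ≠ 0 → 0 < (fourierCoeff (fun t => (f t : ℂ)) k).re →
      ∀ n : ℕ, M ≤ n →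
        ‖∑ m ∈ Finset.Icc 1 n, fourier k (x m)‖ ^ 2
          ≤ ((n : ℝ) * f 0 + C) / (fourierCoeff (fun t => (f t : ℂ)) k).re :=
  exponential_sum_bound_general f hf_cont hf_even hf_mean hf_sum hf_pos M x hgreedy
end

section
/- Let f : 𝕋 → ℝ be continuous, even, with mean value zero and f(0) > 0, and let (x_n)_{n≥1} be a greedy sequence for f with initial points x_1, …, x_M. If for some n ≥ M one has ∫₀¹ |∑_{k=1}^{n} f(x − x_k)| dx > 2·f(0), then ∑_{k=1}^{n+1} ∑_{ℓ=1}^{n+1} f(x_k − x_ℓ) ≤ ∑_{k=1}^{n} ∑_{ℓ=1}^{n} f(x_k − x_ℓ) − f(0). -/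
open MeasureTheory

/-!
Let `g(t) = ∑_{k ≤ n} f(t - x_k)` be the potential of the first `n` points. It has mean zero,
and by greediness `c = g(x_{n+1})` is its minimum. A mean-zero function bounded below by `c`
satisfies `∫ |g| ≤ -2c`, so the hypothesis forces `c < -f(0)`. Since `f` is even, adding
`x_{n+1}` changes the energy by `2c + f(0) < -f(0)`.
-/

theorem integral_abs_le_neg_two_mul_of_integral_eq_zero {Ω : Type*} [MeasurableSpace Ω]
    {μ : Measure Ω} [IsProbabilityMeasure μ] {g : Ω → ℝ} {c : ℝ} (hg : Integrable g μ)
    (hmean : ∫ t, g t ∂μ = 0) (hc : ∀ᵐ t ∂μ, c ≤ g t) :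
    ∫ t, |g t| ∂μ ≤ -2 * c := by
  have hc_nonpos : c ≤ 0 := by
    simpa [hmean] using integral_mono_ae (integrable_const c) hg hc
  have hpointwise : ∀ᵐ t ∂μ, |g t| ≤ g t - 2 * c := by
    filter_upwards [hc] with t ht
    exact abs_le.mpr ⟨by linarith, by linarith⟩
  calc ∫ t, |g t| ∂μ ≤ ∫ t, (g t - 2 * c) ∂μ :=
        integral_mono_ae hg.abs (hg.sub (integrable_const _)) hpointwise
    _ = -2 * c := by simp [integral_sub hg (integrable_const _), hmean]

theorem integral_finsetSum_comp_sub_right_eq_zero {G : Type*} [MeasurableSpace G] [AddGroup G]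
    [MeasurableAdd G] {μ : Measure G} [μ.IsAddRightInvariant] {ι : Type*} (s : Finset ι)
    (a : ι → G) {f : G → ℝ} (hf : Integrable f μ) (hmean : ∫ t, f t ∂μ = 0) :
    ∫ t, ∑ k ∈ s, f (t - a k) ∂μ = 0 := by
  rw [integral_finsetSum _ fun k _ => hf.comp_sub_right (a k)]
  simp [integral_sub_right_eq_self, hmean]

theorem sum_Icc_sum_Icc_succ_of_even {G : Type*} [AddGroup G] {f : G → ℝ}
    (hf_even : ∀ t, f (-t) = f t) (x : ℕ → G) (n : ℕ) :
    ∑ k ∈ Finset.Icc 1 (n + 1), ∑ l ∈ Finset.Icc 1 (n + 1), f (x k - x l)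
      = ∑ k ∈ Finset.Icc 1 n, ∑ l ∈ Finset.Icc 1 n, f (x k - x l)
        + 2 * ∑ k ∈ Finset.Icc 1 n, f (x (n + 1) - x k) + f 0 := by
  have hsymm : ∀ k, f (x k - x (n + 1)) = f (x (n + 1) - x k) := fun k => by
    rw [← hf_even, neg_sub]
  simp only [Finset.sum_Icc_succ_top (Nat.le_add_left 1 n), Finset.sum_add_distrib, hsymm,
    sub_self]
  ring

theorem energy_decreases_general
    (f : UnitAddCircle → ℝ) (hf_cont : Continuous f)
    (hf_even : ∀ t : UnitAddCircle, f (-t) = f t)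
    (hf_mean : (∫ t : UnitAddCircle, f t) = 0)
    (M : ℕ) (x : ℕ → UnitAddCircle)
    (hgreedy : ∀ n : ℕ, M < n → ∀ y : UnitAddCircle,
      ∑ k ∈ Finset.Icc 1 (n - 1), f (x n - x k) ≤ ∑ k ∈ Finset.Icc 1 (n - 1), f (y - x k))
    (n : ℕ) (hn : M ≤ n)
    (hL1 : 2 * f 0 < ∫ t : UnitAddCircle, |∑ k ∈ Finset.Icc 1 n, f (t - x k)|) :
    ∑ k ∈ Finset.Icc 1 (n + 1), ∑ l ∈ Finset.Icc 1 (n + 1), f (x k - x l)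
      ≤ (∑ k ∈ Finset.Icc 1 n, ∑ l ∈ Finset.Icc 1 n, f (x k - x l)) - f 0 := by
  have : IsProbabilityMeasure (volume : Measure UnitAddCircle) := ⟨UnitAddCircle.measure_univ⟩
  have hf_int : Integrable f := hf_cont.integrable_of_hasCompactSupport (.of_compactSpace f)
  have hmin : ∀ y, ∑ k ∈ Finset.Icc 1 n, f (x (n + 1) - x k)
      ≤ ∑ k ∈ Finset.Icc 1 n, f (y - x k) := by
    simpa using hgreedy (n + 1) (by omega)
  have hL1_le := integral_abs_le_neg_two_mul_of_integral_eq_zero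
    (integrable_finsetSum _ fun k _ => hf_int.comp_sub_right (x k))
    (integral_finsetSum_comp_sub_right_eq_zero _ x hf_int hf_mean) (ae_of_all _ hmin)
  rw [sum_Icc_sum_Icc_succ_of_even hf_even]
  linarith

/-- For continuous even mean-zero `f : 𝕋 → ℝ` with `f(0) > 0` and a greedy
sequence `(x_n)` for `f`: if for some `n ≥ M` we have
`∫₀¹ |∑_{k=1}^{n} f(x − x_k)| dx > 2·f(0)`, then the energy decreases:
`∑_{k,ℓ=1}^{n+1} f(x_k − x_ℓ) ≤ ∑_{k,ℓ=1}^{n} f(x_k − x_ℓ) − f(0)`. -/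
theorem energy_decreases
    (f : UnitAddCircle → ℝ) (hf_cont : Continuous f)
    (hf_even : ∀ t : UnitAddCircle, f (-t) = f t)
    (hf_mean : (∫ t : UnitAddCircle, f t) = 0)
    (hf0 : 0 < f 0)
    (M : ℕ) (hM : 1 ≤ M) (x : ℕ → UnitAddCircle)
    (hgreedy : ∀ n : ℕ, M < n → ∀ y : UnitAddCircle,
      ∑ k ∈ Finset.Icc 1 (n - 1), f (x n - x k) ≤ ∑ k ∈ Finset.Icc 1 (n - 1), f (y - x k))
    (n : ℕ) (hn : M ≤ n)
    (hL1 : 2 * f 0 < ∫ t : UnitAddCircle, |∑ k ∈ Finset.Icc 1 n, f (t - x k)|) :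
    ∑ k ∈ Finset.Icc 1 (n + 1), ∑ l ∈ Finset.Icc 1 (n + 1), f (x k - x l)
      ≤ (∑ k ∈ Finset.Icc 1 n, ∑ l ∈ Finset.Icc 1 n, f (x k - x l)) - f 0 :=
  energy_decreases_general f hf_cont hf_even hf_mean M x hgreedy n hn hL1
end

section
/- (Gagliardo–Nirenberg inequality on the circle) There is a universal constant C > 0 such that for every continuously differentiable g : 𝕋 → ℝ with ∫₀¹ g(x) dx = 0, sup_{x∈𝕋} |g(x)| ≤ C · (∫₀¹ |g′(x)|² dx)^{1/3} · (∫₀¹ |g(x)| dx)^{1/3}. -/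
/-!
Since `g` has mean zero it vanishes at some `y`, and with `M = |g x₀| = max |g|` the fundamental
theorem of calculus for `g²` gives `M² = ∫_y^{x₀} 2 g g' ≤ 2 ∫ |g| |g'|`. By Cauchy–Schwarz and
`∫ g² ≤ M ∫ |g|` this is at most `2 (M ∫ |g|)^{1/2} (∫ g'²)^{1/2}`, so `M³ ≤ 4 ∫ g'² ∫ |g|`,
which gives the constant `4^{1/3} ≤ 2`.
-/

open MeasureTheory intervalIntegral Set
open scoped Interval

theorem exists_eq_zero_of_intervalIntegral_eq_zero {f : ℝ → ℝ} {a b : ℝ} (hab : a ≠ b)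
    (hf : ContinuousOn f [[a, b]]) (h : ∫ x in a..b, f x = 0) : ∃ c ∈ [[a, b]], f c = 0 := by
  obtain ⟨c, hc, hfc⟩ := exists_eq_const_mul_intervalIntegral_of_nonneg (μ := volume)
    (g := fun _ => (1 : ℝ)) hf intervalIntegrable_const fun _ _ => zero_le_one
  refine ⟨c, hc, ?_⟩
  simpa [h, sub_ne_zero.2 hab.symm] using hfc.symm

theorem sq_integral_mul_le_integral_sq_mul_integral_sq {α : Type*} [MeasurableSpace α]
    {μ : Measure α} {f h : α → ℝ} (hf₀ : 0 ≤ᵐ[μ] f) (hh₀ : 0 ≤ᵐ[μ] h) (hf : MemLp f 2 μ)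
    (hh : MemLp h 2 μ) :
    (∫ x, f x * h x ∂μ) ^ 2 ≤ (∫ x, f x ^ 2 ∂μ) * ∫ x, h x ^ 2 ∂μ := by
  have holder := integral_mul_le_Lp_mul_Lq_of_nonneg Real.HolderConjugate.two_two hf₀ hh₀
    (by rwa [ENNReal.ofReal_ofNat]) (by rwa [ENNReal.ofReal_ofNat])
  simp only [Real.rpow_two, ← Real.sqrt_eq_rpow] at holder
  have hfh₀ : 0 ≤ ∫ x, f x * h x ∂μ :=
    integral_nonneg_of_ae <| by filter_upwards [hf₀, hh₀] with x hfx hhx using mul_nonneg hfx hhx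
  calc (∫ x, f x * h x ∂μ) ^ 2 ≤ (√(∫ x, f x ^ 2 ∂μ) * √(∫ x, h x ^ 2 ∂μ)) ^ 2 :=
        pow_le_pow_left₀ hfh₀ holder 2
    _ = _ := by
        rw [mul_pow, Real.sq_sqrt (integral_nonneg fun _ => sq_nonneg _),
          Real.sq_sqrt (integral_nonneg fun _ => sq_nonneg _)]

theorem sq_intervalIntegral_mul_le_of_nonneg {f h : ℝ → ℝ} {a b : ℝ} (hab : a ≤ b)
    (hf : Continuous f) (hh : Continuous h) (hf₀ : ∀ x, 0 ≤ f x) (hh₀ : ∀ x, 0 ≤ h x) :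
    (∫ x in a..b, f x * h x) ^ 2 ≤ (∫ x in a..b, f x ^ 2) * ∫ x in a..b, h x ^ 2 := by
  have memLp_two {u : ℝ → ℝ} (hu : Continuous u) : MemLp u 2 (volume.restrict (Ioc a b)) :=
    (memLp_two_iff_integrable_sq hu.aestronglyMeasurable).2 <|
      (intervalIntegrable_iff_integrableOn_Ioc_of_le hab).1 ((hu.pow 2).intervalIntegrable a b)
  simp only [integral_of_le hab]
  exact sq_integral_mul_le_integral_sq_mul_integral_sq (ae_of_all _ hf₀) (ae_of_all _ hh₀)
    (memLp_two hf) (memLp_two hh)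

theorem sq_le_two_mul_integral_abs_mul_abs_deriv {g : ℝ → ℝ} (hg : ContDiff ℝ 1 g)
    {a b x y : ℝ} (hx : x ∈ Icc a b) (hy : y ∈ Icc a b) (hgy : g y = 0) :
    g x ^ 2 ≤ 2 * ∫ t in a..b, |g t| * |deriv g t| := by
  have hderiv (t : ℝ) : HasDerivAt (fun s => g s ^ 2) (2 * g t * deriv g t) t := by
    simpa [mul_comm, mul_assoc, mul_left_comm] using
      ((hg.differentiable one_ne_zero) t).hasDerivAt.fun_pow 2
  have hcont : Continuous fun t => 2 * g t * deriv g t := by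
    have := hg.continuous
    have := hg.continuous_deriv le_rfl
    fun_prop
  have hftc : ∫ t in y..x, 2 * g t * deriv g t = g x ^ 2 := by
    rw [integral_eq_sub_of_hasDerivAt (fun t _ => hderiv t) (hcont.intervalIntegrable _ _), hgy]
    ring
  have hsub : Ι y x ⊆ Ι a b := uIoc_subset_uIoc_of_uIcc_subset_uIcc <|
    uIcc_subset_uIcc (mem_uIcc_of_le hy.1 hy.2) (mem_uIcc_of_le hx.1 hx.2)
  calc g x ^ 2 ≤ |∫ t in y..x, 2 * g t * deriv g t| := hftc ▸ le_abs_self _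
    _ ≤ |∫ t in y..x, (|2 * g t * deriv g t|)| := by
        simpa only [Real.norm_eq_abs] using
          norm_integral_le_abs_integral_norm (f := fun t => 2 * g t * deriv g t) (μ := volume)
    _ ≤ |∫ t in a..b, (|2 * g t * deriv g t|)| :=
        abs_integral_mono_interval hsub (ae_of_all _ fun _ => abs_nonneg _)
          (hcont.abs.intervalIntegrable _ _)
    _ = 2 * ∫ t in a..b, |g t| * |deriv g t| := by
        rw [abs_of_nonneg (integral_nonneg (hx.1.trans hx.2) fun _ _ => abs_nonneg _),
          ← intervalIntegral.integral_const_mul]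
        simp only [abs_mul, abs_two, mul_assoc]

theorem integral_sq_le_mul_integral_abs {g : ℝ → ℝ} (hg : Continuous g) {a b M : ℝ}
    (hab : a ≤ b) (hM : ∀ t ∈ Icc a b, |g t| ≤ M) :
    ∫ t in a..b, |g t| ^ 2 ≤ M * ∫ t in a..b, |g t| := by
  rw [← intervalIntegral.integral_const_mul]
  refine integral_mono_on hab ((hg.abs.pow 2).intervalIntegrable _ _)
    ((continuous_const.mul hg.abs).intervalIntegrable _ _) fun t ht => ?_
  rw [sq]
  exact mul_le_mul_of_nonneg_right (hM t ht) (abs_nonneg _)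

theorem abs_pow_three_le_integral_deriv_sq_mul_integral_abs {g : ℝ → ℝ} (hg : ContDiff ℝ 1 g)
    {a b x y : ℝ} (hx : x ∈ Icc a b) (hy : y ∈ Icc a b) (hgy : g y = 0) :
    |g x| ^ 3 ≤ 4 * (∫ t in a..b, deriv g t ^ 2) * ∫ t in a..b, |g t| := by
  have hab : a ≤ b := hx.1.trans hx.2
  have hgc := hg.continuous
  obtain ⟨x₀, hx₀, hmax⟩ := isCompact_Icc.exists_isMaxOn ⟨x, hx⟩ hgc.abs.continuousOn
  set M := |g x₀|
  set I₂ := ∫ t in a..b, deriv g t ^ 2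
  set I₁ := ∫ t in a..b, |g t|
  have hI₂ : 0 ≤ I₂ := integral_nonneg hab fun _ _ => sq_nonneg _
  have hI₁ : 0 ≤ I₁ := integral_nonneg hab fun _ _ => abs_nonneg _
  have hM4 : M ^ 4 ≤ M * (4 * I₂ * I₁) := by
    calc M ^ 4 = (g x₀ ^ 2) ^ 2 := by rw [← sq_abs (g x₀)]; ring
      _ ≤ (2 * ∫ t in a..b, |g t| * |deriv g t|) ^ 2 :=
          pow_le_pow_left₀ (sq_nonneg _) (sq_le_two_mul_integral_abs_mul_abs_deriv hg hx₀ hy hgy) 2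
      _ ≤ 4 * ((∫ t in a..b, |g t| ^ 2) * ∫ t in a..b, |deriv g t| ^ 2) := by
          rw [mul_pow]
          gcongr
          · norm_num
          · exact sq_intervalIntegral_mul_le_of_nonneg hab hgc.abs
              (hg.continuous_deriv le_rfl).abs (fun _ => abs_nonneg _) fun _ => abs_nonneg _
      _ ≤ 4 * ((M * I₁) * I₂) := by
          simp only [sq_abs (deriv g _)]
          gcongr
          exact integral_sq_le_mul_integral_abs hgc hab hmax
      _ = M * (4 * I₂ * I₁) := by ring
  have hM3 : M ^ 3 ≤ 4 * I₂ * I₁ := by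
    rcases (abs_nonneg (g x₀) : 0 ≤ M).eq_or_lt with hM0 | hM0
    · rw [show M = 0 from hM0.symm, zero_pow three_ne_zero]
      exact mul_nonneg (mul_nonneg (by norm_num) hI₂) hI₁
    · exact le_of_mul_le_mul_left (by linarith [hM4]) hM0
  exact (pow_le_pow_left₀ (abs_nonneg _) (hmax hx) 3).trans hM3

theorem le_two_mul_rpow_mul_rpow_of_pow_three_le {m p q : ℝ} (hp : 0 ≤ p) (hq : 0 ≤ q)
    (h : m ^ 3 ≤ 4 * p * q) : m ≤ 2 * p ^ ((1 : ℝ) / 3) * q ^ ((1 : ℝ) / 3) := by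
  have cube {r : ℝ} (hr : 0 ≤ r) : (r ^ ((1 : ℝ) / 3)) ^ 3 = r := by
    rw [one_div]
    exact_mod_cast Real.rpow_inv_natCast_pow hr three_ne_zero
  refine le_of_pow_le_pow_left₀ three_ne_zero (by positivity) ?_
  rw [mul_pow, mul_pow, cube hp, cube hq]
  nlinarith [mul_nonneg hp hq]

/-- Gagliardo–Nirenberg on the circle: there is a universal `C > 0` such
that for every 1-periodic, continuously differentiable `g : ℝ → ℝ` with `∫₀¹ g = 0`,
`sup_x |g(x)| ≤ C · (∫₀¹ |g′|²)^{1/3} · (∫₀¹ |g|)^{1/3}`. -/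
theorem gagliardo_nirenberg_circle :
    ∃ C > 0, ∀ g : ℝ → ℝ, Function.Periodic g 1 → ContDiff ℝ 1 g →
      (∫ t in (0:ℝ)..1, g t) = 0 →
      ∀ x : ℝ, |g x| ≤ C * (∫ t in (0:ℝ)..1, (deriv g t) ^ 2) ^ ((1:ℝ)/3) *
        (∫ t in (0:ℝ)..1, |g t|) ^ ((1:ℝ)/3) := by
  refine ⟨2, two_pos, fun g hper hg hmean x => ?_⟩
  obtain ⟨y, hy, hgy⟩ := exists_eq_zero_of_intervalIntegral_eq_zero zero_ne_one
    hg.continuous.continuousOn hmean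
  rw [uIcc_of_le zero_le_one] at hy
  obtain ⟨x', hx', hgx⟩ := hper.exists_mem_Ico₀ one_pos x
  rw [hgx]
  exact le_two_mul_rpow_mul_rpow_of_pow_three_le
    (integral_nonneg zero_le_one fun _ _ => sq_nonneg _)
    (integral_nonneg zero_le_one fun _ _ => abs_nonneg _)
    (abs_pow_three_le_integral_deriv_sq_mul_integral_abs hg (Ico_subset_Icc_self hx') hy hgy)
end

section
/- Let α be badly approximable with constant c_α > 0. Then there is a constant C > 0, depending only on c_α, such that for every integer ℓ ≥ 0, ∑_{k=2^ℓ}^{2^{ℓ+1}} ‖kα‖^{−2} ≤ C · 2^{2ℓ}. -/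
/-!
Write `kα = p_k + θ_k` with `p_k` the nearest integer, so `‖kα‖ = |θ_k|`. For `N ≤ k < k' ≤ 2N`
the difference `θ_{k'} - θ_k` is `(k' - k)α` minus an integer, hence
`|θ_{k'} - θ_k| ≥ ‖(k' - k)α‖ ≥ c_α / N`, while `|θ_k| ≥ c_α / (2N)`. So the `θ_k` are points
of modulus at least `δ = c_α / (2N)` at mutual distance at least `δ`; on each side of `0` the
`j`-th smallest has modulus at least `jδ`, and the sum of `θ_k⁻²` is at most
`2 ζ(2) δ⁻² = (4π² / 3) N² / c_α²`.
-/

open MeasureTheory Filter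

/-- `distNearestInt t` is the distance `‖t‖` from a real number `t` to the nearest
integer. -/
noncomputable def distNearestInt (t : ℝ) : ℝ := |t - round t|

open Real

lemma sum_one_div_sq_le_of_separated_of_pos {ι : Type*} (s : Finset ι) (y : ι → ℝ) {δ : ℝ}
    (hδ : 0 < δ) (hy : ∀ i ∈ s, δ ≤ y i)
    (hsep : ∀ i ∈ s, ∀ j ∈ s, i ≠ j → δ ≤ |y i - y j|) :
    ∑ i ∈ s, 1 / y i ^ 2 ≤ (π ^ 2 / 6) / δ ^ 2 := by
  set f : ι → ℕ := fun i => ⌊y i / δ⌋₊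
  have hf_le : ∀ i ∈ s, (f i : ℝ) * δ ≤ y i := fun i hi =>
    (le_div_iff₀ hδ).mp (Nat.floor_le (div_nonneg (hδ.le.trans (hy i hi)) hδ.le))
  have hlt_f : ∀ i, y i < (f i + 1) * δ := fun i => (div_lt_iff₀ hδ).mp (Nat.lt_floor_add_one _)
  have hf_pos : ∀ i ∈ s, 1 ≤ f i := fun i hi =>
    Nat.le_floor (by rw [Nat.cast_one, le_div_iff₀ hδ, one_mul]; exact hy i hi)
  -- two points in the same strip `[jδ, (j+1)δ)` are closer than `δ`
  have hinj : Set.InjOn f s := by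
    intro i hi j hj hij
    by_contra hne
    have hi_lo := hf_le i hi
    have hi_hi := hlt_f i
    rw [hij] at hi_lo hi_hi
    have hclose : |y i - y j| < δ := by
      have := hf_le j hj; have := hlt_f j
      rw [abs_sub_lt_iff]; constructor <;> linarith
    exact (hsep i hi j hj hne).not_gt hclose
  calc ∑ i ∈ s, 1 / y i ^ 2
      ≤ ∑ i ∈ s, 1 / δ ^ 2 * (1 / (f i : ℝ) ^ 2) := by
        refine Finset.sum_le_sum fun i hi => ?_
        have : (1 : ℝ) ≤ f i := by exact_mod_cast hf_pos i hi
        rw [div_mul_div_comm, one_mul, ← mul_pow, mul_comm]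
        gcongr
        exact hf_le i hi
    _ = 1 / δ ^ 2 * ∑ n ∈ s.image f, 1 / (n : ℝ) ^ 2 := by
        rw [Finset.sum_image hinj, Finset.mul_sum]
    _ ≤ 1 / δ ^ 2 * (π ^ 2 / 6) := by
        gcongr
        exact hasSum_zeta_two.summable.sum_le_tsum _ (fun _ _ => by positivity)
          |>.trans_eq hasSum_zeta_two.tsum_eq
    _ = (π ^ 2 / 6) / δ ^ 2 := by ring

lemma sum_one_div_sq_le_of_separated {ι : Type*} (s : Finset ι) (x : ι → ℝ) {δ : ℝ}
    (hδ : 0 < δ) (hx : ∀ i ∈ s, δ ≤ |x i|)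
    (hsep : ∀ i ∈ s, ∀ j ∈ s, i ≠ j → δ ≤ |x i - x j|) :
    ∑ i ∈ s, 1 / x i ^ 2 ≤ (π ^ 2 / 3) / δ ^ 2 := by
  rw [← Finset.sum_filter_add_sum_filter_not s (fun i => 0 < x i)]
  have hpos := sum_one_div_sq_le_of_separated_of_pos (s.filter (fun i => 0 < x i)) x hδ
    (fun i hi => by
      rw [Finset.mem_filter] at hi
      simpa [abs_of_pos hi.2] using hx i hi.1)
    (fun i hi j hj => hsep i (Finset.mem_filter.mp hi).1 j (Finset.mem_filter.mp hj).1)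
  have hneg := sum_one_div_sq_le_of_separated_of_pos (s.filter (fun i => ¬0 < x i)) (-x) hδ
    (fun i hi => by
      rw [Finset.mem_filter, not_lt] at hi
      simpa [abs_of_nonpos hi.2] using hx i hi.1)
    (fun i hi j hj hij => by
      rw [Pi.neg_apply, Pi.neg_apply, neg_sub_neg, abs_sub_comm]
      exact hsep i (Finset.mem_filter.mp hi).1 j (Finset.mem_filter.mp hj).1 hij)
  simp only [Pi.neg_apply, neg_sq] at hneg
  calc _ ≤ (π ^ 2 / 6) / δ ^ 2 + (π ^ 2 / 6) / δ ^ 2 := add_le_add hpos hneg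
    _ = _ := by ring

lemma distNearestInt_sub_le (x y : ℝ) :
    distNearestInt (x - y) ≤ |(x - round x) - (y - round y)| := by
  refine (round_le (x - y) (round x - round y)).trans_eq ?_
  push_cast
  ring_nf

lemma le_abs_sub_of_badly_approximable {α c : ℝ} (hc : 0 ≤ c)
    (hα : ∀ q : ℕ, 0 < q → c / q ≤ distNearestInt (q * α)) {k k' N : ℕ}
    (hkk' : k < k') (hN : k' ≤ k + N) :
    c / N ≤ |(k' * α - round (k' * α)) - (k * α - round (k * α))| := by
  have hq : ((k' - k : ℕ) : ℝ) = k' - k := by push_cast [Nat.cast_sub hkk'.le]; ring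
  calc c / N ≤ c / (k' - k : ℕ) := by
        gcongr
        · exact_mod_cast Nat.sub_pos_of_lt hkk'
        · omega
    _ ≤ distNearestInt ((k' - k : ℕ) * α) := hα _ (Nat.sub_pos_of_lt hkk')
    _ = distNearestInt (k' * α - k * α) := by rw [hq, sub_mul]
    _ ≤ _ := distNearestInt_sub_le _ _

/-- If `α` is badly approximable with constant `c_α > 0`, then there is
`C > 0` (depending only on `c_α`) such that for every `ℓ ≥ 0`,
`∑_{k=2^ℓ}^{2^{ℓ+1}} ‖kα‖^{−2} ≤ C · 2^{2ℓ}`. -/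
theorem badly_approximable_dyadic_sum
    (α cα : ℝ) (hcα : 0 < cα)
    (hα : ∀ q : ℕ, 0 < q → cα / q ≤ distNearestInt (q * α)) :
    ∃ C > 0, ∀ ℓ : ℕ,
      ∑ k ∈ Finset.Icc (2 ^ ℓ : ℕ) (2 ^ (ℓ + 1)), 1 / distNearestInt ((k : ℝ) * α) ^ 2
        ≤ C * 2 ^ (2 * ℓ) := by
  refine ⟨4 * π ^ 2 / (3 * cα ^ 2), by positivity, fun ℓ => ?_⟩
  set N : ℕ := 2 ^ ℓ
  have hN : 0 < N := by positivity
  have hIcc : ∀ k ∈ Finset.Icc N (2 ^ (ℓ + 1)), N ≤ k ∧ k ≤ 2 * N := fun k hk => by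
    rw [Finset.mem_Icc, pow_succ] at hk; omega
  set θ : ℕ → ℝ := fun k => k * α - round (k * α)
  have hθ : ∀ k ∈ Finset.Icc N (2 ^ (ℓ + 1)), cα / (2 * N) ≤ |θ k| := fun k hk => by
    obtain ⟨hNk, hk2N⟩ := hIcc k hk
    calc cα / (2 * N) ≤ cα / k := by
          gcongr
          · exact_mod_cast (by omega : 0 < k)
          · exact_mod_cast hk2N
      _ ≤ |θ k| := hα k (by omega)
  have hsep : ∀ i ∈ Finset.Icc N (2 ^ (ℓ + 1)), ∀ j ∈ Finset.Icc N (2 ^ (ℓ + 1)), i ≠ j →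
      cα / (2 * N) ≤ |θ i - θ j| := by
    intro i hi j hj hij
    have hhalf : cα / (2 * N) ≤ cα / N := by gcongr; linarith [(Nat.cast_pos.mpr hN : (0 : ℝ) < N)]
    obtain ⟨hi1, hi2⟩ := hIcc i hi; obtain ⟨hj1, hj2⟩ := hIcc j hj
    rcases hij.lt_or_gt with h | h
    · rw [abs_sub_comm]; exact hhalf.trans (le_abs_sub_of_badly_approximable hcα.le hα h (by omega))
    · exact hhalf.trans (le_abs_sub_of_badly_approximable hcα.le hα h (by omega))
  calc _ = ∑ k ∈ Finset.Icc N (2 ^ (ℓ + 1)), 1 / θ k ^ 2 := by simp [distNearestInt, θ, sq_abs]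
    _ ≤ (π ^ 2 / 3) / (cα / (2 * N)) ^ 2 :=
        sum_one_div_sq_le_of_separated _ θ (by positivity) hθ hsep
    _ = _ := by simp only [N, Nat.cast_pow, Nat.cast_ofNat]; field_simp; ring
end
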